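/- arXiv:1109.5604 — 3 statements merged into one kernel-verified Lean document; each statement's English description precedes it below -/
import Mathlib

section
/- Let F : ℝ → ℝ be C¹ with F(±1) = 0, F > 0 on (−1,1), and F' locally Lipschitz. If H : ℝ → ℝ is a C² solution of H'' = F'(H) with H(x) → −1 as x → −∞ and H(x) → 1 as x → +∞ and H' → 0 at ±∞, then −1 < H(x) < 1 and H'(x) > 0 for all x ∈ ℝ. -/
/-!
Along a solution of `H'' = F'(H)` the energy `(H')² - 2 F(H)` is constant, and the limits at `+∞`
force it to vanish, so `(H')² = 2 F(H)`. At a double zero `c` of `F` (and `F'(±1) = 0` because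
`H'' → F'(±1)` while `H' → 0`), Lipschitz continuity of `F'` gives `F(s) ≤ K (s - c)²`, hence
`|H'| ≤ √(2K) |H - c|` near the level `c`; by Grönwall, a solution touching `±1` is constant,
which the limits exclude. So `H` stays in `(-1, 1)`, where `F > 0` makes `H'` nonvanishing, and
`H'` cannot be negative since `H` increases from `-1` to `1`.
-/

open Real Filter Set Metric Topology
open scoped NNReal

theorem eq_zero_of_tendsto_of_tendsto_deriv_atTop {g : ℝ → ℝ} {a c : ℝ} (hg : Differentiable ℝ g)
    (hga : Tendsto g atTop (𝓝 a)) (hg'c : Tendsto (deriv g) atTop (𝓝 c)) : c = 0 := by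
  have hmvt : ∀ x, ∃ ξ ∈ Ioo x (x + 1), deriv g ξ = g (x + 1) - g x := fun x => by
    simpa using exists_deriv_eq_slope g (lt_add_one x) hg.continuous.continuousOn
      hg.differentiableOn
  choose ξ hξ hξg using hmvt
  have hξ_top : Tendsto ξ atTop atTop := tendsto_atTop_mono (fun x => (hξ x).1.le) tendsto_id
  have hdiff : Tendsto (fun x => g (x + 1) - g x) atTop (𝓝 (a - a)) :=
    (hga.comp (tendsto_atTop_add_const_right _ 1 tendsto_id)).sub hga
  rw [sub_self] at hdiff
  exact tendsto_nhds_unique ((hg'c.comp hξ_top).congr hξg) hdiff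

theorem eq_zero_of_tendsto_of_tendsto_deriv_atBot {g : ℝ → ℝ} {a c : ℝ} (hg : Differentiable ℝ g)
    (hga : Tendsto g atBot (𝓝 a)) (hg'c : Tendsto (deriv g) atBot (𝓝 c)) : c = 0 := by
  have h := eq_zero_of_tendsto_of_tendsto_deriv_atTop (g := fun x => g (-x)) (c := -c)
    (hg.comp differentiable_neg) (hga.comp tendsto_neg_atTop_atBot)
    (by
      rw [show deriv (fun x => g (-x)) = fun x => -deriv g (-x) from funext (deriv_comp_neg g)]
      exact (hg'c.comp tendsto_neg_atTop_atBot).neg)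
  exact neg_eq_zero.mp h

theorem Continuous.forall_lt_or_forall_gt_of_forall_ne {X : Type*} [TopologicalSpace X]
    [PreconnectedSpace X] {f : X → ℝ} (hf : Continuous f) {c : ℝ} (hne : ∀ x, f x ≠ c) :
    (∀ x, f x < c) ∨ ∀ x, c < f x := by
  contrapose! hne
  obtain ⟨⟨a, ha⟩, ⟨b, hb⟩⟩ := hne
  exact intermediate_value_univ b a hf ⟨hb, ha⟩

theorem abs_le_mul_sq_of_lipschitzOnWith_deriv {f : ℝ → ℝ} {c r : ℝ} {K : ℝ≥0}
    (hf : ∀ x ∈ closedBall c r, DifferentiableAt ℝ f x)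
    (hlip : LipschitzOnWith K (deriv f) (closedBall c r)) (hfc : f c = 0) (hf'c : deriv f c = 0)
    {s : ℝ} (hs : s ∈ closedBall c r) : |f s| ≤ K * (s - c) ^ 2 := by
  have hsub : closedBall c |s - c| ⊆ closedBall c r := closedBall_subset_closedBall hs
  have hbound : ∀ x ∈ closedBall c |s - c|, ‖deriv f x‖ ≤ K * |s - c| := fun x hx => by
    have hc : c ∈ closedBall c r := mem_closedBall_self (nonneg_of_mem_closedBall hs)
    calc ‖deriv f x‖ = dist (deriv f x) (deriv f c) := by simp [hf'c]
      _ ≤ K * dist x c := hlip.dist_le_mul x (hsub hx) c hc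
      _ ≤ K * |s - c| := by gcongr; exact hx
  have hmvt := (convex_closedBall c |s - c|).norm_image_sub_le_of_norm_deriv_le
    (fun x hx => hf x (hsub hx)) hbound (mem_closedBall_self (abs_nonneg _))
    (by simp [Real.dist_eq] : s ∈ closedBall c |s - c|)
  calc |f s| = ‖f s - f c‖ := by simp [hfc]
    _ ≤ K * |s - c| * ‖s - c‖ := hmvt
    _ = K * (s - c) ^ 2 := by rw [Real.norm_eq_abs, mul_assoc, ← sq, sq_abs]

section Gronwall

variable {u : ℝ → ℝ} {L a b : ℝ}

theorem eqOn_zero_of_abs_deriv_le_of_eq_zero_left (hu : Differentiable ℝ u)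
    (hbound : ∀ t ∈ Icc a b, |deriv u t| ≤ L * |u t|) (ha : u a = 0) : EqOn u 0 (Icc a b) := by
  intro t ht
  have := norm_le_gronwallBound_of_norm_deriv_right_le (K := L) (ε := 0) hu.continuous.continuousOn
    (fun x _ => (hu x).hasDerivAt.hasDerivWithinAt) (by simp [ha] : ‖u a‖ ≤ 0)
    (fun x hx => by simpa using hbound x (Ico_subset_Icc_self hx)) t ht
  simpa [gronwallBound] using this

theorem eqOn_zero_of_abs_deriv_le_of_eq_zero_right (hu : Differentiable ℝ u)
    (hbound : ∀ t ∈ Icc a b, |deriv u t| ≤ L * |u t|) (hb : u b = 0) : EqOn u 0 (Icc a b) := by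
  intro t ht
  have hreflect := eqOn_zero_of_abs_deriv_le_of_eq_zero_left (u := fun t => u (-t)) (a := -b)
    (b := -a) (L := L) (hu.comp differentiable_neg)
    (fun s hs => by
      rw [deriv_comp_neg, abs_neg]
      exact hbound (-s) ⟨le_neg.mpr hs.2, neg_le.mpr hs.1⟩)
    (by simpa using hb)
  simpa using hreflect ⟨neg_le_neg ht.2, neg_le_neg ht.1⟩

theorem eq_zero_of_abs_deriv_le_mul_abs {r x₀ : ℝ} (hu : Differentiable ℝ u) (hr : 0 < r)
    (hbound : ∀ x, |u x| ≤ r → |deriv u x| ≤ L * |u x|) (hx₀ : u x₀ = 0) : u = 0 := by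
  have hopen : IsOpen {x | u x = 0} := isOpen_iff_mem_nhds.mpr fun y (hy : u y = 0) => by
    have hnear : ∀ᶠ t in 𝓝 y, |u t| ≤ r := by
      simpa [hy, Real.dist_eq] using (hu.continuous.tendsto y).eventually (closedBall_mem_nhds _ hr)
    obtain ⟨δ, hδ, hball⟩ := nhds_basis_closedBall.mem_iff.mp hnear
    have hIcc : ∀ t ∈ Icc (y - δ) (y + δ), |deriv u t| ≤ L * |u t| := fun t ht =>
      hbound t (hball (closedBall_eq_Icc ▸ ht))
    refine mem_of_superset (closedBall_mem_nhds y hδ) fun t ht => ?_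
    rw [closedBall_eq_Icc, ← Icc_union_Icc_eq_Icc (b := y) (by linarith) (by linarith)] at ht
    rcases ht with ht | ht
    · exact eqOn_zero_of_abs_deriv_le_of_eq_zero_right hu
        (fun s hs => hIcc s ⟨hs.1, by linarith [hs.2]⟩) hy ht
    · exact eqOn_zero_of_abs_deriv_le_of_eq_zero_left hu
        (fun s hs => hIcc s ⟨by linarith [hs.1], hs.2⟩) hy ht
  have hclopen : IsClopen {x | u x = 0} := ⟨isClosed_eq hu.continuous continuous_const, hopen⟩
  funext x
  exact eq_univ_iff_forall.mp (hclopen.eq_univ ⟨x₀, hx₀⟩) x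

end Gronwall

section Energy

variable {F H : ℝ → ℝ}

theorem deriv_sq_eq_two_mul_of_tendsto_atTop (hF : Differentiable ℝ F) (hH : Differentiable ℝ H)
    (hH' : Differentiable ℝ (deriv H)) (hode : ∀ x, deriv (deriv H) x = deriv F (H x)) {c : ℝ}
    (hFc : F c = 0) (hlim : Tendsto H atTop (𝓝 c)) (hlim' : Tendsto (deriv H) atTop (𝓝 0))
    (x : ℝ) : deriv H x ^ 2 = 2 * F (H x) := by
  set E : ℝ → ℝ := fun x => deriv H x ^ 2 - 2 * F (H x)
  have hE : ∀ x, HasDerivAt E 0 x := fun x => by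
    have h := ((hH' x).hasDerivAt.pow 2).sub
      (((hF (H x)).hasDerivAt.comp x (hH x).hasDerivAt).const_mul 2)
    rw [hode] at h
    exact h.congr_deriv (by ring)
  have hE_const : ∀ y, E x = E y := fun y =>
    is_const_of_deriv_eq_zero (fun x => (hE x).differentiableAt) (fun x => (hE x).deriv) x y
  have hE_lim : Tendsto E atTop (𝓝 0) := by
    simpa [hFc] using (hlim'.pow 2).sub (((hF.continuous.tendsto c).comp hlim).const_mul 2)
  have hEx : E x = 0 := tendsto_nhds_unique (tendsto_const_nhds.congr hE_const) hE_lim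
  exact sub_eq_zero.mp hEx

theorem eq_of_deriv_sq_eq_two_mul_of_apply_eq (hF : Differentiable ℝ F)
    (hlip : LocallyLipschitz (deriv F)) (hH : Differentiable ℝ H)
    (henergy : ∀ x, deriv H x ^ 2 = 2 * F (H x)) {c x₀ : ℝ} (hFc : F c = 0) (hF'c : deriv F c = 0)
    (hx₀ : H x₀ = c) (x : ℝ) : H x = c := by
  obtain ⟨K, t, ht, hK⟩ := hlip c
  obtain ⟨r, hr, hrt⟩ := nhds_basis_closedBall.mem_iff.mp ht
  have hquad : ∀ s ∈ closedBall c r, |F s| ≤ K * (s - c) ^ 2 := fun s =>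
    abs_le_mul_sq_of_lipschitzOnWith_deriv (fun x _ => hF x) (hK.mono hrt) hFc hF'c
  have hbound : ∀ x, |H x - c| ≤ r → |deriv (fun x => H x - c) x| ≤ √(2 * K) * |H x - c| := by
    intro x hx
    have hFx := hquad (H x) (show dist (H x) c ≤ r by rwa [Real.dist_eq])
    rw [deriv_sub_const, ← pow_le_pow_iff_left₀ (abs_nonneg _) (by positivity) two_ne_zero,
      sq_abs, henergy, mul_pow, sq_sqrt (by positivity), sq_abs]
    nlinarith [le_abs_self (F (H x))]
  have hzero := eq_zero_of_abs_deriv_le_mul_abs (hH.sub_const c) hr hbound (sub_eq_zero.mpr hx₀)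
  exact sub_eq_zero.mp (congrFun hzero x)

theorem apply_ne_of_tendsto (hF : Differentiable ℝ F) (hlip : LocallyLipschitz (deriv F))
    (hH : Differentiable ℝ H) (henergy : ∀ x, deriv H x ^ 2 = 2 * F (H x)) {c d : ℝ}
    (hFc : F c = 0) (hF'c : deriv F c = 0) {l : Filter ℝ} [l.NeBot]
    (hlim : Tendsto H l (𝓝 d)) (hdc : d ≠ c) (x : ℝ) : H x ≠ c := fun hx =>
  hdc <| tendsto_nhds_unique hlim <| tendsto_const_nhds.congr fun y =>
    (eq_of_deriv_sq_eq_two_mul_of_apply_eq hF hlip hH henergy hFc hF'c hx y).symm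

end Energy

theorem heteroclinic_monotone_and_pinned
    (F H : ℝ → ℝ)
    (hF : ContDiff ℝ 1 F) (hF1 : F 1 = 0) (hFm1 : F (-1) = 0)
    (hFpos : ∀ s ∈ Ioo (-1 : ℝ) 1, 0 < F s)
    (hlip : LocallyLipschitz (deriv F))
    (hH : ContDiff ℝ 2 H)
    (hode : ∀ x : ℝ, deriv (deriv H) x = deriv F (H x))
    (hlim_top : Tendsto H atTop (nhds 1))
    (hlim_bot : Tendsto H atBot (nhds (-1)))
    (hlim'_top : Tendsto (deriv H) atTop (nhds 0))
    (hlim'_bot : Tendsto (deriv H) atBot (nhds 0)) :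
    ∀ x : ℝ, (-1 < H x ∧ H x < 1) ∧ 0 < deriv H x := by
  have hFd : Differentiable ℝ F := hF.differentiable one_ne_zero
  have hHd : Differentiable ℝ H := hH.differentiable two_ne_zero
  have hH'd : Differentiable ℝ (deriv H) :=
    (contDiff_succ_iff_deriv.mp (hH : ContDiff ℝ (1 + 1) H)).2.2.differentiable one_ne_zero
  have hH''_lim {l : Filter ℝ} {c : ℝ} (h : Tendsto H l (𝓝 c)) :
      Tendsto (deriv (deriv H)) l (𝓝 (deriv F c)) :=
    (((hF.continuous_deriv le_rfl).tendsto c).comp h).congr fun x => (hode x).symm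
  have hF'1 := eq_zero_of_tendsto_of_tendsto_deriv_atTop hH'd hlim'_top (hH''_lim hlim_top)
  have hF'm1 := eq_zero_of_tendsto_of_tendsto_deriv_atBot hH'd hlim'_bot (hH''_lim hlim_bot)
  have henergy := deriv_sq_eq_two_mul_of_tendsto_atTop hFd hHd hH'd hode hF1 hlim_top hlim'_top
  have hlt : ∀ x, H x < 1 := by
    refine (hHd.continuous.forall_lt_or_forall_gt_of_forall_ne
      (apply_ne_of_tendsto hFd hlip hHd henergy hF1 hF'1 hlim_bot (by norm_num))).resolve_right ?_
    obtain ⟨y, hy⟩ := (hlim_bot.eventually (eventually_lt_nhds (by norm_num : (-1 : ℝ) < 1))).exists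
    exact fun h => (h y).not_gt hy
  have hgt : ∀ x, -1 < H x := by
    refine (hHd.continuous.forall_lt_or_forall_gt_of_forall_ne
      (apply_ne_of_tendsto hFd hlip hHd henergy hFm1 hF'm1 hlim_top (by norm_num))).resolve_left ?_
    obtain ⟨y, hy⟩ := (hlim_top.eventually (eventually_gt_nhds (by norm_num : (-1 : ℝ) < 1))).exists
    exact fun h => (h y).not_gt hy
  have hderiv_ne : ∀ x ∈ univ, deriv H x ≠ 0 := fun x _ h0 =>
    (hFpos (H x) ⟨hgt x, hlt x⟩).ne' (by simpa [h0] using henergy x)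
  have hderiv_pos := (hasDerivWithinAt_forall_lt_or_forall_gt_of_forall_ne convex_univ
    (fun x _ => (hHd x).hasDerivAt.hasDerivWithinAt) hderiv_ne).resolve_left fun hneg =>
      (hlt 0).not_ge <|
        (strictAnti_of_deriv_neg fun x => hneg x (mem_univ x)).antitone.le_of_tendsto hlim_top 0
  exact fun x => ⟨⟨hgt x, hlt x⟩, hderiv_pos x (mem_univ x)⟩
end

section
/- Let μ > 0, R ∈ ℝ, let c : [R, ∞) → ℝ be continuous with c(x) ≥ μ² for all x ≥ R, and let φ : [R, ∞) → ℝ be a bounded C² solution of −φ''(x) + c(x) φ(x) = 0. Then |φ(x)| ≤ |φ(R)| e^{−μ (x − R)} for all x ≥ R. -/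
/-!
The barrier `ψ(x) = A e^{-μ(x-R)} + δ e^{μ(x-R)}` with `A = |φ(R)|` and `δ > 0` satisfies
`ψ'' = μ² ψ`, hence is a supersolution of `-u'' + c u = 0` when `c ≥ μ²`. It dominates `±φ` at
`R` and, since it grows exponentially while `φ` is bounded, also at some point `b` beyond any given
`x`. On `[R, b]` the maximum principle then gives `±φ ≤ ψ`: at a negative interior minimum of
`ψ ∓ φ` we would have `(ψ ∓ φ)'' ≤ c (ψ ∓ φ) < 0`, which is impossible. Let `δ → 0`.
-/

open Real Set Filter Topology

theorem IsLocalMin.nonneg_of_hasDerivAt_of_hasDerivAt {f f' : ℝ → ℝ} {x f'' : ℝ}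
    (hmin : IsLocalMin f x) (hf : ∀ᶠ y in 𝓝 x, HasDerivAt f (f' y) y)
    (hf' : HasDerivAt f' f'' x) : 0 ≤ f'' := by
  -- Otherwise the second-derivative test makes `x` a local maximum too, so `f` is locally
  -- constant and `f'' = 0`.
  by_contra! hneg
  have hderiv : deriv f =ᶠ[𝓝 x] f' := hf.mono fun y hy => hy.deriv
  have hcrit : deriv f x = 0 := by
    rw [hderiv.eq_of_nhds]; exact hmin.hasDerivAt_eq_zero hf.self_of_nhds
  have hmax : IsLocalMax f x :=
    isLocalMax_of_deriv_deriv_neg (by rwa [hderiv.deriv_eq, hf'.deriv]) hcrit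
      hf.self_of_nhds.continuousAt
  have hconst : f =ᶠ[𝓝 x] fun _ => f x := by
    filter_upwards [hmin, hmax] with y hy₁ hy₂ using le_antisymm hy₂ hy₁
  have hf'_zero : f' =ᶠ[𝓝 x] fun _ => 0 := by
    filter_upwards [hderiv, hconst.deriv] with y hy₁ hy₂
    rw [← hy₁, hy₂, deriv_const]
  exact hneg.ne (hf'.unique ((hasDerivAt_const x 0).congr_of_eventuallyEq hf'_zero))

theorem nonneg_of_deriv2_neg_of_neg {a b : ℝ} {w w' w'' : ℝ → ℝ}
    (hw : ContinuousOn w (Icc a b)) (hw' : ∀ x ∈ Ioo a b, HasDerivAt w (w' x) x)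
    (hw'' : ∀ x ∈ Ioo a b, HasDerivAt w' (w'' x) x)
    (hneg : ∀ x ∈ Ioo a b, w x < 0 → w'' x < 0) (ha : 0 ≤ w a) (hb : 0 ≤ w b) :
    ∀ x ∈ Icc a b, 0 ≤ w x := by
  intro x hx
  by_contra! hwx
  obtain ⟨m, hm, hmin⟩ := isCompact_Icc.exists_isMinOn ⟨x, hx⟩ hw
  have hwm : w m < 0 := (hmin hx).trans_lt hwx
  have hm' : m ∈ Ioo a b :=
    ⟨hm.1.lt_of_ne (by rintro rfl; linarith), hm.2.lt_of_ne (by rintro rfl; linarith)⟩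
  have hloc : IsLocalMin w m := hmin.isLocalMin (Icc_mem_nhds hm'.1 hm'.2)
  have hw'_near : ∀ᶠ y in 𝓝 m, HasDerivAt w (w' y) y :=
    eventually_of_mem (Ioo_mem_nhds hm'.1 hm'.2) hw'
  exact (hloc.nonneg_of_hasDerivAt_of_hasDerivAt hw'_near (hw'' m hm')).not_gt (hneg m hm' hwm)

theorem le_of_subsolution_of_supersolution {a b : ℝ} {c u u' u'' v v' v'' : ℝ → ℝ}
    (hc : ∀ x ∈ Ioo a b, 0 < c x)
    (hu : ContinuousOn u (Icc a b)) (hu' : ∀ x ∈ Ioo a b, HasDerivAt u (u' x) x)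
    (hu'' : ∀ x ∈ Ioo a b, HasDerivAt u' (u'' x) x)
    (hv : ContinuousOn v (Icc a b)) (hv' : ∀ x ∈ Ioo a b, HasDerivAt v (v' x) x)
    (hv'' : ∀ x ∈ Ioo a b, HasDerivAt v' (v'' x) x)
    (hsub : ∀ x ∈ Ioo a b, -u'' x + c x * u x ≤ 0)
    (hsuper : ∀ x ∈ Ioo a b, 0 ≤ -v'' x + c x * v x)
    (ha : u a ≤ v a) (hb : u b ≤ v b) :
    ∀ x ∈ Icc a b, u x ≤ v x := by
  intro x hx
  refine sub_nonneg.mp <| nonneg_of_deriv2_neg_of_neg (w := v - u) (hv.sub hu)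
    (fun y hy => (hv' y hy).sub (hu' y hy)) (fun y hy => (hv'' y hy).sub (hu'' y hy))
    (fun y hy hneg => ?_) (sub_nonneg.mpr ha) (sub_nonneg.mpr hb) x hx
  have hcw : c y * (v y - u y) < 0 := mul_neg_of_pos_of_neg (hc y hy) hneg
  linarith [hsub y hy, hsuper y hy]

noncomputable def expBarrier (μ R A δ x : ℝ) : ℝ :=
  A * exp (-μ * (x - R)) + δ * exp (μ * (x - R))

section expBarrier

variable {μ R A δ : ℝ}

theorem expBarrier_self : expBarrier μ R A δ R = A + δ := by
  simp [expBarrier]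

theorem expBarrier_nonneg (hA : 0 ≤ A) (hδ : 0 ≤ δ) (x : ℝ) : 0 ≤ expBarrier μ R A δ x := by
  unfold expBarrier; positivity

theorem hasDerivAt_expBarrier (x : ℝ) :
    HasDerivAt (expBarrier μ R A δ) (expBarrier μ R (-μ * A) (μ * δ) x) x := by
  have hlin (k : ℝ) : HasDerivAt (fun y => k * (y - R)) k x := by
    simpa using ((hasDerivAt_id x).sub_const R).const_mul k
  refine (((hlin (-μ)).exp.const_mul A).add ((hlin μ).exp.const_mul δ)).congr_deriv ?_
  simp only [expBarrier]; ring

theorem hasDerivAt_deriv_expBarrier (x : ℝ) :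
    HasDerivAt (expBarrier μ R (-μ * A) (μ * δ)) (μ ^ 2 * expBarrier μ R A δ x) x :=
  hasDerivAt_expBarrier x |>.congr_deriv (by simp only [expBarrier]; ring)

theorem tendsto_expBarrier_atTop (hμ : 0 < μ) (hδ : 0 < δ) :
    Tendsto (expBarrier μ R A δ) atTop atTop := by
  have hlin : Tendsto (fun x => μ * (x - R)) atTop atTop :=
    (tendsto_atTop_add_const_right _ _ tendsto_id).const_mul_atTop hμ
  have hdecay : Tendsto (fun x => A * exp (-μ * (x - R))) atTop (𝓝 0) := by
    simpa [neg_mul] using (tendsto_exp_neg_atTop_nhds_zero.comp hlin).const_mul A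
  exact hdecay.add_atTop ((tendsto_exp_atTop.comp hlin).const_mul_atTop hδ)

end expBarrier

theorem le_expBarrier {μ R A δ : ℝ} {c φ φ' φ'' : ℝ → ℝ} (hμ : 0 < μ) (hA : 0 ≤ A) (hδ : 0 < δ)
    (hcl : ∀ x ∈ Ici R, μ ^ 2 ≤ c x) (hbd : BddAbove (φ '' Ici R))
    (hd1 : ∀ x ∈ Ici R, HasDerivAt φ (φ' x) x) (hd2 : ∀ x ∈ Ici R, HasDerivAt φ' (φ'' x) x)
    (hsub : ∀ x ∈ Ici R, -φ'' x + c x * φ x ≤ 0) (hR : φ R ≤ A) :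
    ∀ x ∈ Ici R, φ x ≤ expBarrier μ R A δ x := by
  intro x hx
  obtain ⟨M, hM⟩ := hbd
  obtain ⟨b, hMb, hxb⟩ :=
    (((tendsto_expBarrier_atTop (R := R) (A := A) hμ hδ).eventually_ge_atTop M).and
      (eventually_ge_atTop x)).exists
  have hIoo : ∀ y ∈ Ioo R b, y ∈ Ici R := fun y hy => hy.1.le
  refine le_of_subsolution_of_supersolution (c := c)
    (fun y hy => (pow_pos hμ 2).trans_le (hcl y (hIoo y hy)))
    (fun y hy => (hd1 y hy.1).continuousAt.continuousWithinAt)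
    (fun y hy => hd1 y (hIoo y hy)) (fun y hy => hd2 y (hIoo y hy))
    (fun y _ => (hasDerivAt_expBarrier y).continuousAt.continuousWithinAt)
    (fun y _ => hasDerivAt_expBarrier y) (fun y _ => hasDerivAt_deriv_expBarrier y)
    (fun y hy => hsub y (hIoo y hy)) (fun y hy => ?_) ?_ ?_ x ⟨hx, hxb⟩
  · have hψ := expBarrier_nonneg (μ := μ) (R := R) hA hδ.le y
    linarith [mul_le_mul_of_nonneg_right (hcl y (hIoo y hy)) hψ]
  · rw [expBarrier_self]; linarith
  · exact (hM (mem_image_of_mem φ (hx.trans hxb))).trans hMb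

theorem one_dimensional_exponential_decay_general
    (μ R : ℝ) (c φ φ' φ'' : ℝ → ℝ) (hμ : 0 < μ)
    (hcl : ∀ x ∈ Ici R, μ ^ 2 ≤ c x)
    (hbd : ∃ M : ℝ, ∀ x ∈ Ici R, |φ x| ≤ M)
    (hd1 : ∀ x ∈ Ici R, HasDerivAt φ (φ' x) x)
    (hd2 : ∀ x ∈ Ici R, HasDerivAt φ' (φ'' x) x)
    (heq : ∀ x ∈ Ici R, -φ'' x + c x * φ x = 0) :
    ∀ x ∈ Ici R, |φ x| ≤ |φ R| * Real.exp (-μ * (x - R)) := by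
  obtain ⟨M, hM⟩ := hbd
  have hbdAbove (ψ : ℝ → ℝ) (hψ : ∀ x, ψ x ≤ |φ x|) : BddAbove (ψ '' Ici R) :=
    ⟨M, by rintro _ ⟨y, hy, rfl⟩; exact (hψ y).trans (hM y hy)⟩
  intro x hx
  have hbarrier (δ : ℝ) (hδ : 0 < δ) : |φ x| ≤ expBarrier μ R |φ R| δ x := by
    refine abs_le.mpr ⟨neg_le.mp ?_, ?_⟩
    · exact le_expBarrier (φ := fun y => -φ y) hμ (abs_nonneg _) hδ hcl
        (hbdAbove _ fun y => neg_le_abs (φ y)) (fun y hy => (hd1 y hy).neg)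
        (fun y hy => (hd2 y hy).neg) (fun y hy => by linarith [heq y hy]) (neg_le_abs _) x hx
    · exact le_expBarrier hμ (abs_nonneg _) hδ hcl (hbdAbove φ fun y => le_abs_self (φ y))
        hd1 hd2 (fun y hy => (heq y hy).le) (le_abs_self _) x hx
  refine le_of_forall_pos_le_add fun ε hε => ?_
  have hE := exp_pos (μ * (x - R))
  simpa [expBarrier, div_mul_cancel₀ _ hE.ne'] using
    hbarrier (ε / exp (μ * (x - R))) (div_pos hε hE)

theorem one_dimensional_exponential_decay
    (μ R : ℝ) (c φ φ' φ'' : ℝ → ℝ) (hμ : 0 < μ)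
    (hc : ContinuousOn c (Ici R))
    (hcl : ∀ x ∈ Ici R, μ ^ 2 ≤ c x)
    (hbd : ∃ M : ℝ, ∀ x ∈ Ici R, |φ x| ≤ M)
    (hd1 : ∀ x ∈ Ici R, HasDerivAt φ (φ' x) x)
    (hd2 : ∀ x ∈ Ici R, HasDerivAt φ' (φ'' x) x)
    (heq : ∀ x ∈ Ici R, -φ'' x + c x * φ x = 0) :
    ∀ x ∈ Ici R, |φ x| ≤ |φ R| * Real.exp (-μ * (x - R)) :=
  one_dimensional_exponential_decay_general μ R c φ φ' φ'' hμ hcl hbd hd1 hd2 heq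
end

section
/- Let H be a C² solution of H'' = F'(H) on ℝ with ½(H'(x))² = F(H(x)) and H(x) → 1 as x → +∞, where F is C³ near 1 with F(1) = 0, F'(1) = 0, and F''(1) = α₀² with α₀ > 0. Assume −1 < H < 1 and H' > 0. Then there exist constants A > 0 and C > 0 such that |H(x) − 1 + A e^{−α₀ x}| ≤ C e^{−2 α₀ x} and |H'(x) − A α₀ e^{−α₀ x}| ≤ C e^{−2 α₀ x} for all x ≥ 0. -/
/-!
Write `u = 1 - H`. The first integral together with the Taylor expansion
`F s = α₀² / 2 * (s - 1)² + O((s - 1)³)` gives `(H')² = α₀² u² + O(u³)`, and since `H' > 0` this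
means `u' = -α₀ u + O(u²)`. Once `u` is small this forces the crude decay `u = O(e^{-α₀ x / 2})`.
The logarithmic derivative of `w = u e^{α₀ x}` is then `O(u)`, which is integrable, so `w`
converges to some `A > 0`; now `w' = O(u w) = O(e^{-α₀ x})`, whence `w = A + O(e^{-α₀ x})`.
Continuity takes care of the compact range `[0, X]`.
-/

open Real Filter Asymptotics Topology Set

section Taylor

variable {E : Type*} [NormedAddCommGroup E] [NormedSpace ℝ E]

theorem isBigO_sub_pow_succ_of_hasDerivAt {f f' : ℝ → E} {a : ℝ} {n : ℕ}
    (hf : ∀ᶠ x in 𝓝 a, HasDerivAt f (f' x) x) (hf' : f' =O[𝓝 a] fun x ↦ (x - a) ^ n) :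
    (fun x ↦ f x - f a) =O[𝓝 a] fun x ↦ (x - a) ^ (n + 1) := by
  obtain ⟨c, hc₀, hc⟩ := hf'.exists_nonneg
  obtain ⟨ε, hε, hball⟩ := Metric.eventually_nhds_iff_ball.mp (hf.and hc.bound)
  refine IsBigO.of_bound c ?_
  filter_upwards [Metric.ball_mem_nhds a hε] with x hx
  have hsub : uIcc a x ⊆ Metric.ball a ε :=
    (convex_ball a ε).ordConnected.uIcc_subset (Metric.mem_ball_self hε) hx
  have hbound : ∀ y ∈ uIcc a x, ‖f' y‖ ≤ c * ‖(x - a) ^ n‖ := fun y hy ↦ by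
    refine (hball y (hsub hy)).2.trans ?_
    simp only [norm_pow, Real.norm_eq_abs]
    exact mul_le_mul_of_nonneg_left
      (pow_le_pow_left₀ (abs_nonneg _) (abs_sub_left_of_mem_uIcc hy) n) hc₀
  calc ‖f x - f a‖ ≤ c * ‖(x - a) ^ n‖ * ‖x - a‖ :=
        (convex_uIcc a x).norm_image_sub_le_of_norm_hasDerivWithin_le
          (fun y hy ↦ (hball y (hsub hy)).1.hasDerivWithinAt) hbound left_mem_uIcc right_mem_uIcc
    _ = c * ‖(x - a) ^ (n + 1)‖ := by rw [pow_succ, norm_mul, mul_assoc]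

end Taylor

theorem ContDiffAt.isBigO_sub_taylor_two {F : ℝ → ℝ} {a : ℝ} (hF : ContDiffAt ℝ 3 F a) :
    (fun s ↦ F s - (F a + deriv F a * (s - a) + deriv (deriv F) a / 2 * (s - a) ^ 2))
      =O[𝓝 a] fun s ↦ (s - a) ^ 3 := by
  set c := deriv (deriv F) a
  have hF' : ContDiffAt ℝ 2 (deriv F) a := hF.derivWithin (by norm_num)
  have hnear : ∀ᶠ y in 𝓝 a, HasDerivAt F (deriv F y) y ∧
      HasDerivAt (deriv F) (deriv (deriv F) y) y := by
    filter_upwards [hF.eventually (by simp)] with y hy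
    exact ⟨(hy.differentiableAt (by simp)).hasDerivAt,
      ((hy.derivWithin (m := 2) (by norm_num)).differentiableAt (by simp)).hasDerivAt⟩
  have h₂ : (fun s ↦ deriv (deriv F) s - c) =O[𝓝 a] fun s ↦ (s - a) ^ 1 := by
    simpa using ((hF'.derivWithin (m := 1) (by norm_num)).differentiableAt
      (by simp)).hasDerivAt.isBigO_sub
  have h₁ : (fun s ↦ deriv F s - deriv F a - c * (s - a)) =O[𝓝 a] fun s ↦ (s - a) ^ 2 := by
    refine (isBigO_sub_pow_succ_of_hasDerivAt (f := fun s ↦ deriv F s - c * (s - a)) ?_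
      h₂).congr_left fun s ↦ by ring
    filter_upwards [hnear] with y hy
    simpa using hy.2.fun_sub (((hasDerivAt_id' y).sub_const a).const_mul c)
  refine (isBigO_sub_pow_succ_of_hasDerivAt
    (f := fun s ↦ F s - deriv F a * (s - a) - c / 2 * (s - a) ^ 2) ?_ h₁).congr_left
      fun s ↦ by ring
  filter_upwards [hnear] with y hy
  convert (hy.1.fun_sub (((hasDerivAt_id' y).sub_const a).const_mul (deriv F a))).fun_sub
    ((((hasDerivAt_id' y).sub_const a).fun_pow 2).const_mul (c / 2)) using 1
  norm_num; ring

section Decay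

variable {f f' : ℝ → ℝ} {X β : ℝ}

theorem monotoneOn_Ici_of_hasDerivAt_nonneg (hf : ∀ x ≥ X, HasDerivAt f (f' x) x)
    (hf' : ∀ x ≥ X, 0 ≤ f' x) : MonotoneOn f (Ici X) :=
  monotoneOn_of_hasDerivWithinAt_nonneg (convex_Ici X)
    (fun x hx ↦ (hf x hx).continuousAt.continuousWithinAt)
    (fun x hx ↦ (hf x (interior_subset hx)).hasDerivWithinAt) fun x hx ↦ hf' x (interior_subset hx)

theorem antitoneOn_Ici_of_hasDerivAt_nonpos (hf : ∀ x ≥ X, HasDerivAt f (f' x) x)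
    (hf' : ∀ x ≥ X, f' x ≤ 0) : AntitoneOn f (Ici X) :=
  antitoneOn_of_hasDerivWithinAt_nonpos (convex_Ici X)
    (fun x hx ↦ (hf x hx).continuousAt.continuousWithinAt)
    (fun x hx ↦ (hf x (interior_subset hx)).hasDerivWithinAt) fun x hx ↦ hf' x (interior_subset hx)

theorem tendsto_exp_neg_mul_atTop_nhds_zero (hβ : 0 < β) :
    Tendsto (fun x ↦ exp (-β * x)) atTop (𝓝 0) :=
  tendsto_exp_atBot.comp (tendsto_id.const_mul_atTop_of_neg (neg_lt_zero.mpr hβ))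

theorem isBigO_exp_of_deriv_le_neg_mul (hf : ∀ᶠ x in atTop, HasDerivAt f (f' x) x)
    (hf₀ : ∀ᶠ x in atTop, 0 ≤ f x) (hf' : ∀ᶠ x in atTop, f' x ≤ -β * f x) :
    f =O[atTop] fun x ↦ exp (-β * x) := by
  obtain ⟨X, hX⟩ := eventually_atTop.mp (hf.and (hf₀.and hf'))
  have hanti : AntitoneOn (fun x ↦ f x * exp (β * x)) (Ici X) := by
    refine antitoneOn_Ici_of_hasDerivAt_nonpos (fun x hx ↦ (hX x hx).1.mul
      (((hasDerivAt_id' x).const_mul β).exp)) fun x hx ↦ ?_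
    have := (hX x hx).2.2
    nlinarith [exp_pos (β * x)]
  refine IsBigO.of_bound (f X * exp (β * X)) ?_
  filter_upwards [eventually_ge_atTop X] with x hx
  have hexp : exp (β * x) * exp (-β * x) = 1 := by rw [← exp_add]; simp
  rw [Real.norm_of_nonneg (hX x hx).2.1, Real.norm_of_nonneg (exp_pos _).le]
  calc f x = f x * exp (β * x) * exp (-β * x) := by rw [mul_assoc, hexp, mul_one]
    _ ≤ f X * exp (β * X) * exp (-β * x) :=
      mul_le_mul_of_nonneg_right (hanti self_mem_Ici hx hx) (exp_pos _).le

theorem exists_isBigO_sub_of_deriv_isBigO_exp (hβ : 0 < β)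
    (hf : ∀ᶠ x in atTop, HasDerivAt f (f' x) x) (hf' : f' =O[atTop] fun x ↦ exp (-β * x)) :
    ∃ L, (fun x ↦ f x - L) =O[atTop] fun x ↦ exp (-β * x) := by
  obtain ⟨c, hc₀, hc⟩ := hf'.exists_nonneg
  obtain ⟨X, hX⟩ := eventually_atTop.mp (hf.and hc.bound)
  -- `E x = ∫ t in Ioi x, c * exp (-β * t)`, so `f + E` decreases and `f - E` increases
  set E : ℝ → ℝ := fun x ↦ c / β * exp (-β * x)
  have hE : ∀ x, HasDerivAt E (-(c * exp (-β * x))) x := fun x ↦ by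
    refine ((((hasDerivAt_id' x).const_mul (-β)).exp).const_mul (c / β)).congr_deriv ?_
    field_simp
  have hbound : ∀ x ≥ X, |f' x| ≤ c * exp (-β * x) := fun x hx ↦ by
    simpa [abs_of_pos (exp_pos _)] using (hX x hx).2
  have hupper : AntitoneOn (fun x ↦ f x + E x) (Ici X) :=
    antitoneOn_Ici_of_hasDerivAt_nonpos (fun x hx ↦ (hX x hx).1.add (hE x))
      fun x hx ↦ by linarith [(abs_le.mp (hbound x hx)).2]
  have hlower : MonotoneOn (fun x ↦ f x - E x) (Ici X) :=
    monotoneOn_Ici_of_hasDerivAt_nonneg (fun x hx ↦ (hX x hx).1.sub (hE x))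
      fun x hx ↦ by linarith [(abs_le.mp (hbound x hx)).1]
  have hE₀ : ∀ x, 0 ≤ E x := fun x ↦ by positivity
  have hsep : ∀ x ∈ Ici X, ∀ y ∈ Ici X, f x - E x ≤ f y + E y := by
    intro x hx y hy
    rcases le_total x y with hxy | hyx
    · linarith [hlower hx hy hxy, hE₀ y]
    · linarith [hupper hy hx hyx, hE₀ x]
  set L := sInf ((fun x ↦ f x + E x) '' Ici X)
  have hbdd : BddBelow ((fun x ↦ f x + E x) '' Ici X) :=
    ⟨f X - E X, forall_mem_image.mpr (hsep X self_mem_Ici)⟩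
  refine ⟨L, IsBigO.of_bound (c / β) ?_⟩
  filter_upwards [eventually_ge_atTop X] with x hx
  have hle : L ≤ f x + E x := csInf_le hbdd (mem_image_of_mem _ hx)
  have hge : f x - E x ≤ L :=
    le_csInf (image_nonempty.mpr nonempty_Ici) (forall_mem_image.mpr (hsep x hx))
  rw [Real.norm_of_nonneg (exp_pos _).le, Real.norm_eq_abs, abs_le]
  constructor <;> linarith

end Decay

section PerturbedLinearDecay

variable {u u' : ℝ → ℝ} {α : ℝ}

theorem exists_pos_tendsto_mul_exp_of_deriv_add_mul_isBigO_sq (hα : 0 < α)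
    (hu : ∀ᶠ x in atTop, HasDerivAt u (u' x) x) (hu₀ : ∀ᶠ x in atTop, 0 < u x)
    (hlim : Tendsto u atTop (𝓝 0)) (hu' : (fun x ↦ u' x + α * u x) =O[atTop] fun x ↦ u x ^ 2) :
    ∃ L > 0, Tendsto (fun x ↦ u x * exp (α * x)) atTop (𝓝 L) := by
  obtain ⟨K, -, hK⟩ := hu'.exists_nonneg
  have hbound : ∀ᶠ x in atTop, 0 < u x ∧ |u' x + α * u x| ≤ K * u x ^ 2 := by
    filter_upwards [hu₀, hK.bound] with x hx hb
    simpa [abs_of_pos hx] using And.intro hx hb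
  have hsmall : ∀ᶠ x in atTop, K * u x < α / 2 := by
    have : Tendsto (fun x ↦ K * u x) atTop (𝓝 0) := by simpa using hlim.const_mul K
    exact this.eventually (gt_mem_nhds (by positivity))
  have hcrude : u =O[atTop] fun x ↦ exp (-(α / 2) * x) := by
    refine isBigO_exp_of_deriv_le_neg_mul hu (hu₀.mono fun x hx ↦ hx.le) ?_
    filter_upwards [hbound, hsmall] with x ⟨hx, hb⟩ hs
    nlinarith [(abs_le.mp hb).2]
  -- the logarithmic derivative of `u e^{αx}` is `O(u)`, hence integrable
  obtain ⟨ℓ, hℓ⟩ : ∃ ℓ, (fun x ↦ log (u x) + α * x - ℓ) =O[atTop] fun x ↦ exp (-(α / 2) * x) := by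
    refine exists_isBigO_sub_of_deriv_isBigO_exp (f' := fun x ↦ (u' x + α * u x) / u x)
      (by positivity) ?_ (IsBigO.trans ?_ hcrude)
    · filter_upwards [hu, hu₀] with x hd hx
      refine ((hd.log hx.ne').add ((hasDerivAt_id' x).const_mul α)).congr_deriv ?_
      field_simp
    · refine IsBigO.of_bound K ?_
      filter_upwards [hbound] with x ⟨hx, hb⟩
      rw [Real.norm_eq_abs, Real.norm_eq_abs, abs_div, abs_of_pos hx, div_le_iff₀ hx]
      linarith
  have hlog : Tendsto (fun x ↦ log (u x) + α * x) atTop (𝓝 ℓ) :=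
    tendsto_sub_nhds_zero_iff.mp
      (hℓ.trans_tendsto (tendsto_exp_neg_mul_atTop_nhds_zero (by positivity)))
  refine ⟨exp ℓ, exp_pos ℓ, ((continuous_exp.tendsto ℓ).comp hlog).congr' ?_⟩
  filter_upwards [hu₀] with x hx
  simp [exp_add, exp_log hx]

theorem exists_pos_isBigO_sub_exp_of_deriv_add_mul_isBigO_sq (hα : 0 < α)
    (hu : ∀ᶠ x in atTop, HasDerivAt u (u' x) x) (hu₀ : ∀ᶠ x in atTop, 0 < u x)
    (hlim : Tendsto u atTop (𝓝 0)) (hu' : (fun x ↦ u' x + α * u x) =O[atTop] fun x ↦ u x ^ 2) :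
    ∃ A > 0, (fun x ↦ u x - A * exp (-α * x)) =O[atTop] (fun x ↦ exp (-2 * α * x)) ∧
      (fun x ↦ u' x + A * α * exp (-α * x)) =O[atTop] (fun x ↦ exp (-2 * α * x)) := by
  obtain ⟨L, hL, hw_lim⟩ := exists_pos_tendsto_mul_exp_of_deriv_add_mul_isBigO_sq hα hu hu₀ hlim hu'
  set w : ℝ → ℝ := fun x ↦ u x * exp (α * x)
  have hu_eq : ∀ x, u x = w x * exp (-α * x) := fun x ↦ by
    rw [mul_assoc, ← exp_add]; simp
  have hw_bdd : w =O[atTop] fun _ ↦ (1 : ℝ) := hw_lim.isBigO_one ℝ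
  have hu_exp : u =O[atTop] fun x ↦ exp (-α * x) :=
    (hw_bdd.mul (isBigO_refl (fun x ↦ exp (-α * x)) atTop)).congr (fun x ↦ (hu_eq x).symm)
      fun x ↦ one_mul _
  obtain ⟨A, hA⟩ : ∃ A, (fun x ↦ w x - A) =O[atTop] fun x ↦ exp (-α * x) := by
    refine exists_isBigO_sub_of_deriv_isBigO_exp (f' := fun x ↦ (u' x + α * u x) * exp (α * x))
      hα ?_ ?_
    · filter_upwards [hu] with x hd
      refine (hd.mul ((hasDerivAt_id' x).const_mul α).exp).congr_deriv ?_
      ring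
    · have := (hu'.mul (isBigO_refl (fun x ↦ exp (α * x)) atTop)).trans
        ((hw_bdd.mul hu_exp).congr_left fun x ↦ ?_)
      · simpa using this
      · simp only [w]; ring
  have hA_eq : A = L := tendsto_nhds_unique
    (tendsto_sub_nhds_zero_iff.mp (hA.trans_tendsto (tendsto_exp_neg_mul_atTop_nhds_zero hα)))
    hw_lim
  have hexp_sq : ∀ x, exp (-α * x) * exp (-α * x) = exp (-2 * α * x) := fun x ↦ by
    rw [← exp_add]; ring_nf
  have hmain : (fun x ↦ u x - A * exp (-α * x)) =O[atTop] (fun x ↦ exp (-2 * α * x)) := by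
    refine ((hA.mul (isBigO_refl (fun x ↦ exp (-α * x)) atTop)).congr_left fun x ↦ ?_).congr_right
      hexp_sq
    rw [hu_eq x]; ring
  refine ⟨A, hA_eq ▸ hL, hmain, ?_⟩
  have hsq : (fun x ↦ u x ^ 2) =O[atTop] fun x ↦ exp (-2 * α * x) :=
    (hu_exp.pow 2).congr_right fun x ↦ by rw [sq, hexp_sq]
  refine ((hu'.trans hsq).sub (hmain.const_mul_left α)).congr_left fun x ↦ ?_
  ring

end PerturbedLinearDecay

theorem isBigO_sub_mul_of_isBigO_sq_sub {ι : Type*} {l : Filter ι} {a u : ι → ℝ} {c : ℝ}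
    (hc : 0 < c) (ha : ∀ᶠ x in l, 0 ≤ a x) (hu : ∀ᶠ x in l, 0 < u x)
    (h : (fun x ↦ a x ^ 2 - (c * u x) ^ 2) =O[l] fun x ↦ u x ^ 3) :
    (fun x ↦ a x - c * u x) =O[l] fun x ↦ u x ^ 2 := by
  obtain ⟨K, -, hK⟩ := h.exists_nonneg
  refine IsBigO.of_bound (K / c) ?_
  filter_upwards [hK.bound, ha, hu] with x hb ha hu
  simp only [Real.norm_eq_abs, abs_pow, abs_of_pos hu] at hb ⊢
  have : |a x - c * u x| * (c * u x) ≤ K * u x ^ 3 := by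
    refine le_trans ?_ hb
    rw [show a x ^ 2 - (c * u x) ^ 2 = (a x - c * u x) * (a x + c * u x) by ring, abs_mul]
    gcongr
    rw [abs_of_nonneg (by positivity)]
    linarith
  rw [div_mul_eq_mul_div, le_div_iff₀ hc]
  nlinarith

theorem exists_pos_forall_ge_abs_le_of_isBigO {f g : ℝ → ℝ} (hf : Continuous f)
    (hg : Continuous g) (hg₀ : ∀ x, 0 < g x) (h : f =O[atTop] g) (a : ℝ) :
    ∃ C > 0, ∀ x ≥ a, |f x| ≤ C * g x := by
  obtain ⟨c, hc⟩ := h.bound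
  obtain ⟨X, hX⟩ := eventually_atTop.mp hc
  have hcompact : f =O[𝓟 (Icc a X)] g :=
    (hf.continuousOn.isBigO_principal isCompact_Icc (c := (1 : ℝ)) (by simp)).trans
      (hg.continuousOn.isBigO_rev_principal isCompact_Icc (fun x _ ↦ (hg₀ x).ne') (1 : ℝ))
  have htail : f =O[𝓟 (Ici X)] g := isBigO_principal.mpr ⟨c, hX⟩
  have hcover : 𝓟 (Ici a) ≤ 𝓟 (Icc a X) ⊔ 𝓟 (Ici X) := by
    rw [sup_principal, principal_mono]
    intro x hx
    rcases le_total x X with h | h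
    exacts [Or.inl ⟨hx, h⟩, Or.inr h]
  obtain ⟨C, hC, hCb⟩ := ((hcompact.sup htail).mono hcover).exists_pos
  refine ⟨C, hC, fun x hx ↦ ?_⟩
  simpa [abs_of_pos (hg₀ x)] using isBigOWith_principal.mp hCb x hx


theorem heteroclinic_refined_asymptotics_general
    (F H : ℝ → ℝ) (α₀ : ℝ) (hα : 0 < α₀)
    (hF : ContDiffAt ℝ 3 F 1)
    (hF1 : F 1 = 0) (hF'1 : deriv F 1 = 0)
    (hF''1 : deriv (deriv F) 1 = α₀ ^ 2)
    (hH : ContDiff ℝ 2 H)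
    (hfirst : ∀ x : ℝ, (deriv H x) ^ 2 / 2 = F (H x))
    (hlim : Tendsto H atTop (nhds 1))
    (hpin : ∀ x : ℝ, -1 < H x ∧ H x < 1)
    (hmono : ∀ x : ℝ, 0 < deriv H x) :
    ∃ (A C : ℝ), 0 < A ∧ 0 < C ∧
      ∀ x ≥ (0 : ℝ),
        |H x - 1 + A * Real.exp (-α₀ * x)| ≤ C * Real.exp (-2 * α₀ * x) ∧
        |deriv H x - A * α₀ * Real.exp (-α₀ * x)| ≤ C * Real.exp (-2 * α₀ * x) := by
  have hTaylor := hF.isBigO_sub_taylor_two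
  simp only [hF1, hF'1, hF''1, zero_mul, zero_add] at hTaylor
  have hcube : (fun x ↦ (H x - 1) ^ 3) =O[atTop] fun x ↦ (1 - H x) ^ 3 :=
    (isBigO_neg_left.mpr (isBigO_refl _ _)).congr_left fun x ↦ by ring
  have hFH : (fun x ↦ deriv H x ^ 2 - (α₀ * (1 - H x)) ^ 2) =O[atTop] fun x ↦ (1 - H x) ^ 3 :=
    (((hTaylor.comp_tendsto hlim).const_mul_left 2).trans hcube).congr_left fun x ↦ by
      simp only [Function.comp, ← hfirst x]; ring
  have hsqrt := isBigO_sub_mul_of_isBigO_sq_sub hα (.of_forall fun x ↦ (hmono x).le)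
    (.of_forall fun x ↦ sub_pos.mpr (hpin x).2) hFH
  obtain ⟨A, hA, hH_asymp, hH'_asymp⟩ := exists_pos_isBigO_sub_exp_of_deriv_add_mul_isBigO_sq hα
    (u' := fun x ↦ -deriv H x)
    (.of_forall fun x ↦ ((hH.differentiable (by norm_num) x).hasDerivAt.const_sub 1))
    (.of_forall fun x ↦ sub_pos.mpr (hpin x).2) (by simpa using hlim.const_sub 1)
    (hsqrt.neg_left.congr_left fun x ↦ by ring)
  have hHc : Continuous H := hH.continuous
  have hH'c : Continuous (deriv H) := hH.continuous_deriv (by norm_num)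
  obtain ⟨C₁, hC₁, h₁⟩ := exists_pos_forall_ge_abs_le_of_isBigO
    (f := fun x ↦ H x - 1 + A * exp (-α₀ * x)) (by fun_prop) (by fun_prop)
    (fun x ↦ exp_pos _) (hH_asymp.neg_left.congr_left fun x ↦ by ring) 0
  obtain ⟨C₂, -, h₂⟩ := exists_pos_forall_ge_abs_le_of_isBigO
    (f := fun x ↦ deriv H x - A * α₀ * exp (-α₀ * x)) (by fun_prop) (by fun_prop)
    (fun x ↦ exp_pos _) (hH'_asymp.neg_left.congr_left fun x ↦ by ring) 0
  refine ⟨A, max C₁ C₂, hA, lt_max_of_lt_left hC₁, fun x hx ↦ ⟨?_, ?_⟩⟩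
  · exact (h₁ x hx).trans (by gcongr; exact le_max_left _ _)
  · exact (h₂ x hx).trans (by gcongr; exact le_max_right _ _)

theorem heteroclinic_refined_asymptotics
    (F H : ℝ → ℝ) (α₀ : ℝ) (hα : 0 < α₀)
    (hF : ContDiffAt ℝ 3 F 1)
    (hF1 : F 1 = 0) (hF'1 : deriv F 1 = 0)
    (hF''1 : deriv (deriv F) 1 = α₀ ^ 2)
    (hH : ContDiff ℝ 2 H)
    (hode : ∀ x : ℝ, deriv (deriv H) x = deriv F (H x))
    (hfirst : ∀ x : ℝ, (deriv H x) ^ 2 / 2 = F (H x))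
    (hlim : Tendsto H atTop (nhds 1))
    (hpin : ∀ x : ℝ, -1 < H x ∧ H x < 1)
    (hmono : ∀ x : ℝ, 0 < deriv H x) :
    ∃ (A C : ℝ), 0 < A ∧ 0 < C ∧
      ∀ x ≥ (0 : ℝ),
        |H x - 1 + A * Real.exp (-α₀ * x)| ≤ C * Real.exp (-2 * α₀ * x) ∧
        |deriv H x - A * α₀ * Real.exp (-α₀ * x)| ≤ C * Real.exp (-2 * α₀ * x) :=
  heteroclinic_refined_asymptotics_general F H α₀ hα hF hF1 hF'1 hF''1 hH hfirst hlim hpin hmono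
end
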